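/- arXiv:1605.06984 — 7 statements merged into one kernel-verified Lean document; each statement's English description precedes it below -/
import Mathlib

section
/- For all nonnegative real numbers x1, x2, x3, x12, x13, x23 and any real r ≥ 2, the inequality (x1+x2+x3+x12+x13+x23)^r + x1^r + x2^r + x3^r ≥ (x1+x2+x12)^r + (x1+x3+x13)^r + (x2+x3+x23)^r holds. -/
/-!
Write `f t = t ^ r`. Since `f` is convex, its increments `f (u + w) - f u` increase with `u`, so
each excess `x12`, `x13`, `x23` can be moved onto the full sum; this reduces the claim to
`x12 = x13 = x23 = 0`, i.e. to the nonnegativity of the third difference `Δ_x Δ_y Δ_z f (0)`.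
For `r ≥ 2` the derivative `r t ^ (r - 1)` is convex, so `t ↦ f (t + y) - f t` has increasing
derivative, hence is convex, and its increments increase as well.
-/

open Set

theorem ConvexOn.add_sub_le_add_sub {𝕜 : Type*} [Field 𝕜] [LinearOrder 𝕜] [IsStrictOrderedRing 𝕜]
    {s : Set 𝕜} {f : 𝕜 → 𝕜} (hf : ConvexOn 𝕜 s f) {u v w : 𝕜}
    (hu : u ∈ s) (hv : v ∈ s) (huw : u + w ∈ s) (hvw : v + w ∈ s) (huv : u ≤ v) (hw : 0 ≤ w) :
    f (u + w) - f u ≤ f (v + w) - f v := by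
  rcases hw.eq_or_lt with rfl | hw
  · simp
  have hslope : slope f u (u + w) ≤ slope f v (v + w) :=
    calc slope f u (u + w) ≤ slope f u (v + w) :=
          hf.slope_mono hu ⟨huw, by simpa using hw.ne'⟩ ⟨hvw, ne_of_gt (by linarith)⟩ (by linarith)
      _ = slope f (v + w) u := slope_comm _ _ _
      _ ≤ slope f (v + w) v :=
          hf.slope_mono hvw ⟨hu, ne_of_lt (by linarith)⟩ ⟨hv, by simpa using hw.ne'⟩ huv
      _ = slope f v (v + w) := slope_comm _ _ _
  simpa [slope_def_field, div_le_div_iff_of_pos_right hw] using hslope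

theorem Real.rpow_add_sub_rpow_le {r u v w : ℝ} (hr : 1 ≤ r) (hu : 0 ≤ u) (huv : u ≤ v)
    (hw : 0 ≤ w) : (u + w) ^ r - u ^ r ≤ (v + w) ^ r - v ^ r :=
  (convexOn_rpow hr).add_sub_le_add_sub (mem_Ici.2 hu) (mem_Ici.2 (hu.trans huv))
    (mem_Ici.2 (by positivity)) (mem_Ici.2 (by linarith)) huv hw

theorem Real.convexOn_rpow_add_sub_rpow {r y : ℝ} (hr : 2 ≤ r) (hy : 0 ≤ y) :
    ConvexOn ℝ (Ici 0) fun t : ℝ ↦ (t + y) ^ r - t ^ r := by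
  have hderiv (t : ℝ) : HasDerivAt (fun t : ℝ ↦ (t + y) ^ r - t ^ r)
      (r * (t + y) ^ (r - 1) - r * t ^ (r - 1)) t :=
    ((Real.hasDerivAt_rpow_const (Or.inr (by linarith))).comp_add_const t y).sub
      (Real.hasDerivAt_rpow_const (Or.inr (by linarith)))
  refine MonotoneOn.convexOn_of_deriv (convex_Ici 0)
    (fun t _ ↦ (hderiv t).continuousAt.continuousWithinAt)
    (fun t _ ↦ (hderiv t).differentiableAt.differentiableWithinAt) ?_
  rw [interior_Ici]
  intro a ha b _ hab
  rw [(hderiv a).deriv, (hderiv b).deriv, ← mul_sub, ← mul_sub]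
  exact mul_le_mul_of_nonneg_left
    (Real.rpow_add_sub_rpow_le (by linarith) (le_of_lt ha) hab hy) (by linarith)

theorem Real.add_rpow_add_add_rpow_le {r x y z : ℝ} (hr : 2 ≤ r) (hx : 0 ≤ x) (hy : 0 ≤ y)
    (hz : 0 ≤ z) :
    (x + y) ^ r + (x + z) ^ r + (y + z) ^ r ≤ (x + y + z) ^ r + x ^ r + y ^ r + z ^ r := by
  have key := (Real.convexOn_rpow_add_sub_rpow hr hy).add_sub_le_add_sub (u := 0) (v := z)
    (w := x) (mem_Ici.2 le_rfl) (mem_Ici.2 hz) (mem_Ici.2 (by positivity))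
    (mem_Ici.2 (by positivity)) hz hx
  simp only [zero_add, Real.zero_rpow (by linarith : r ≠ 0)] at key
  rw [show z + x + y = x + y + z by ring, add_comm z x, add_comm z y] at key
  linarith

theorem stmt_0 (x1 x2 x3 x12 x13 x23 r : ℝ)
    (h1 : 0 ≤ x1) (h2 : 0 ≤ x2) (h3 : 0 ≤ x3)
    (h12 : 0 ≤ x12) (h13 : 0 ≤ x13) (h23 : 0 ≤ x23) (hr : 2 ≤ r) :
    (x1 + x2 + x12) ^ r + (x1 + x3 + x13) ^ r + (x2 + x3 + x23) ^ r ≤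
      (x1 + x2 + x3 + x12 + x13 + x23) ^ r + x1 ^ r + x2 ^ r + x3 ^ r := by
  have hr1 : 1 ≤ r := by linarith
  have move12 := Real.rpow_add_sub_rpow_le hr1 (u := x1 + x2)
    (v := x1 + x2 + x3 + x13 + x23) (by positivity) (by linarith) h12
  have move13 := Real.rpow_add_sub_rpow_le hr1 (u := x1 + x3)
    (v := x1 + x2 + x3 + x23) (by positivity) (by linarith) h13
  have move23 := Real.rpow_add_sub_rpow_le hr1 (u := x2 + x3)
    (v := x1 + x2 + x3) (by positivity) (by linarith) h23
  rw [show x1 + x2 + x3 + x13 + x23 + x12 = x1 + x2 + x3 + x12 + x13 + x23 by ring] at move12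
  rw [show x1 + x2 + x3 + x23 + x13 = x1 + x2 + x3 + x13 + x23 by ring] at move13
  linarith [Real.add_rpow_add_add_rpow_le hr h1 h2 h3]
end

section
/- For positive semidefinite matrices A, B ∈ M_n(ℂ) and any positive integer k, the Kronecker power satisfies (A+B)^{⊗k} ≥ A^{⊗k} + B^{⊗k} in the Loewner order (i.e., (A+B)^{⊗k} − A^{⊗k} − B^{⊗k} is positive semidefinite). -/
open ComplexOrder

/-- The `k`-fold Kronecker (tensor) power of a matrix. -/
def kronPow {n : ℕ} (k : ℕ) (A : Matrix (Fin n) (Fin n) ℂ) :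
    Matrix (Fin k → Fin n) (Fin k → Fin n) ℂ :=
  fun x y => ∏ i, A (x i) (y i)

/-!
Expanding `⨂ᵢ (Cᵢ + Dᵢ)` multilinearly gives the sum, over all subsets `t` of the factors, of the
Kronecker products taking `Cᵢ` for `i ∈ t` and `Dᵢ` otherwise. The terms `t = univ` and `t = ∅` are
`⨂ᵢ Cᵢ` and `⨂ᵢ Dᵢ`; every other term is positive semidefinite, since writing `Cᵢ = Sᵢᴴ Sᵢ` and
`Dᵢ = Tᵢᴴ Tᵢ` it has the form `Xᴴ X` with `X` a Kronecker product of the `Sᵢ` and `Tᵢ`.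
-/

open Finset

namespace Matrix

variable {ι l m n R : Type*} [Fintype ι]

def piKronecker [CommMonoid R] (C : ι → Matrix m n R) : Matrix (ι → m) (ι → n) R :=
  fun x y => ∏ i, C i (x i) (y i)

lemma piKronecker_mul [CommSemiring R] [Fintype m] [DecidableEq ι]
    (C : ι → Matrix l m R) (D : ι → Matrix m n R) :
    piKronecker C * piKronecker D = piKronecker fun i => C i * D i := by
  ext x y
  simp only [mul_apply, piKronecker, ← prod_mul_distrib]
  exact (Fintype.prod_sum fun i j => C i (x i) j * D i j (y i)).symm

lemma conjTranspose_piKronecker [CommMonoid R] [StarMul R] (C : ι → Matrix m n R) :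
    (piKronecker C)ᴴ = piKronecker fun i => (C i)ᴴ := by
  ext x y
  simp only [conjTranspose_apply, piKronecker, star_prod]

lemma piKronecker_add [CommSemiring R] [DecidableEq ι] (C D : ι → Matrix m n R) :
    piKronecker (C + D) = ∑ t : Finset ι, piKronecker (t.piecewise C D) := by
  ext x y
  simp only [piKronecker, sum_apply, Pi.add_apply, add_apply]
  rw [Fintype.prod_add]
  refine sum_congr rfl fun t _ => ?_
  rw [← prod_mul_prod_compl t]
  congr 1 <;> refine prod_congr rfl fun i hi => ?_
  · rw [piecewise_eq_of_mem _ _ _ hi]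
  · rw [piecewise_eq_of_notMem _ _ _ (mem_compl.mp hi)]

variable {𝕜 : Type*} [RCLike 𝕜] [DecidableEq ι] [Fintype m] [DecidableEq m]

lemma PosSemidef.piKronecker {C : ι → Matrix m m 𝕜} (hC : ∀ i, (C i).PosSemidef) :
    (piKronecker C).PosSemidef := by
  open scoped MatrixOrder Matrix.Norms.L2Operator in
  choose S hS using fun i => CStarAlgebra.nonneg_iff_eq_star_mul_self.mp (hC i).nonneg
  have hC_eq : C = fun i => (S i)ᴴ * S i := funext hS
  rw [hC_eq, ← piKronecker_mul, ← conjTranspose_piKronecker]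
  exact posSemidef_conjTranspose_mul_self _

theorem posSemidef_piKronecker_add_sub_sub [Nonempty ι] {C D : ι → Matrix m m 𝕜}
    (hC : ∀ i, (C i).PosSemidef) (hD : ∀ i, (D i).PosSemidef) :
    (piKronecker (C + D) - piKronecker C - piKronecker D).PosSemidef := by
  have hne : (univ : Finset ι) ≠ ∅ := univ_nonempty.ne_empty
  have hsplit : piKronecker (C + D) - piKronecker C - piKronecker D =
      ∑ t ∈ (univ : Finset (Finset ι)) \ {univ, ∅}, piKronecker (t.piecewise C D) := by
    rw [piKronecker_add, ← sum_sdiff (subset_univ {univ, ∅}), sum_pair hne, piecewise_univ,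
      piecewise_empty]
    abel
  rw [hsplit]
  exact posSemidef_sum _ fun t _ => PosSemidef.piKronecker fun i =>
    t.piecewise_cases C D PosSemidef (hC i) (hD i)

end Matrix

theorem stmt_2 {n : ℕ} (A B : Matrix (Fin n) (Fin n) ℂ)
    (hA : A.PosSemidef) (hB : B.PosSemidef) (k : ℕ) (hk : 0 < k) :
    (kronPow k (A + B) - kronPow k A - kronPow k B).PosSemidef := by
  have : Nonempty (Fin k) := ⟨⟨0, hk⟩⟩
  exact Matrix.posSemidef_piKronecker_add_sub_sub (fun _ => hA) fun _ => hB
end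

section
/- Let x_J ≥ 0 be indexed by nonempty subsets J of K = {1,…,m}, set s_J = Σ_{I ⊆ J, I ≠ ∅} x_I, and for real r ≥ m−1 define f(x) = Σ_{j=1}^m (−1)^{m−j} Σ_{|J|=j} s_J^r. Then f(x) ≥ 0 for all such x. -/
/-!
Allow a weight `x_∅` as well, so that `s_J = ∑_{I ⊆ J} x_I`; this class of weights is closed
under the restriction used below. Induct on `#S`: pick `a ∈ S` and multiply by `t` the weights of
the sets containing `a`. At `t = 0` the alternating sum vanishes, since `J` and `J ∪ {a}` then
have equal subset sums and opposite signs. The `t`-derivative is `r ∑_{a ∈ I} x_I Δ_I`, where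
`Δ_I` is the alternating sum of `s_J^(r-1)` over the `J ⊇ I`; writing `J = I ∪ K`, it is a sum of
the same kind over `S \ I` with nonnegative weights, so `Δ_I ≥ 0` by induction, as
`#(S \ I) - 1 ≤ r - 1`. Hence the sum is nondecreasing in `t` on `[0, 1]`. The term `J = ∅`,
which the theorem leaves out, is `(-1)^m 0^r ≤ 0` (note `0^0 = 1`).
-/

open Finset

section

variable {α : Type*}

def sumOverSubsets (x : Finset α → ℝ) (J : Finset α) : ℝ := ∑ I ∈ J.powerset, x I

theorem sumOverSubsets_nonneg {x : Finset α → ℝ} (hx : ∀ I, 0 ≤ x I) (J : Finset α) :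
    0 ≤ sumOverSubsets x J :=
  sum_nonneg fun I _ => hx I

theorem sumOverSubsets_mono {x : Finset α → ℝ} (hx : ∀ I, 0 ≤ x I) {I J : Finset α}
    (h : I ⊆ J) : sumOverSubsets x I ≤ sumOverSubsets x J :=
  sum_le_sum_of_subset_of_nonneg (powerset_mono.mpr h) fun K _ _ => hx K

variable [DecidableEq α]

theorem sum_powerset_union_of_disjoint {M : Type*} [AddCommMonoid M] {U K : Finset α}
    (h : Disjoint U K) (f : Finset α → M) :
    ∑ I ∈ (U ∪ K).powerset, f I = ∑ L ∈ K.powerset, ∑ V ∈ U.powerset, f (V ∪ L) := by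
  rw [sum_comm, ← sum_product']
  refine sum_nbij' (fun I => (I ∩ U, I ∩ K)) (fun p => p.1 ∪ p.2) ?_ ?_ ?_ ?_ ?_
  · intro I _
    simp
  · intro p hp
    simp only [mem_product, mem_powerset] at hp ⊢
    exact union_subset_union hp.1 hp.2
  · intro I hI
    simp [← inter_union_distrib_left, inter_eq_left.mpr (mem_powerset.mp hI)]
  · rintro ⟨V, L⟩ hp
    simp only [mem_product, mem_powerset] at hp
    simp [union_inter_distrib_right, inter_eq_left.mpr hp.1, inter_eq_left.mpr hp.2,
      disjoint_iff_inter_eq_empty.mp (h.mono_left hp.1),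
      disjoint_iff_inter_eq_empty.mp (h.symm.mono_left hp.2)]
  · intro I hI
    simp [← inter_union_distrib_left, inter_eq_left.mpr (mem_powerset.mp hI)]

theorem sumOverSubsets_union {I K : Finset α} (h : Disjoint I K) (x : Finset α → ℝ) :
    sumOverSubsets x (I ∪ K) =
      sumOverSubsets (fun L => sumOverSubsets (fun V => x (V ∪ L)) I) K :=
  sum_powerset_union_of_disjoint h x

theorem sumOverSubsets_insert_of_eq_zero {a : α} {x : Finset α → ℝ}
    (hx : ∀ I, a ∈ I → x I = 0) (J : Finset α) :
    sumOverSubsets x (insert a J) = sumOverSubsets x J := by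
  by_cases haJ : a ∈ J
  · rw [insert_eq_of_mem haJ]
  · rw [sumOverSubsets, sum_powerset_insert haJ,
      sum_eq_zero fun I _ => hx _ (mem_insert_self a I), add_zero, sumOverSubsets]

def altPowersetSum (S : Finset α) (g : Finset α → ℝ) : ℝ :=
  ∑ J ∈ S.powerset, (-1) ^ #(S \ J) * g J

theorem altPowersetSum_congr {S : Finset α} {g g' : Finset α → ℝ} (h : ∀ J ⊆ S, g J = g' J) :
    altPowersetSum S g = altPowersetSum S g' :=
  sum_congr rfl fun J hJ => by rw [h J (mem_powerset.mp hJ)]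

theorem altPowersetSum_singleton (a : α) (g : Finset α → ℝ) :
    altPowersetSum {a} g = g {a} - g ∅ := by
  rw [altPowersetSum, ← insert_empty, sum_powerset_insert (notMem_empty a)]
  simp
  ring

theorem altPowersetSum_eq_zero_of_insert {S : Finset α} {a : α} (ha : a ∈ S)
    {g : Finset α → ℝ} (hg : ∀ J, g (insert a J) = g J) : altPowersetSum S g = 0 := by
  rw [altPowersetSum, ← insert_erase ha, sum_powerset_insert (notMem_erase a S),
    ← sum_add_distrib]
  refine sum_eq_zero fun J hJ => ?_
  have haJ : a ∉ J := fun h => notMem_erase a S (mem_powerset.mp hJ h)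
  have hsdiff : insert a (S.erase a) \ J = insert a (insert a (S.erase a) \ insert a J) := by
    ext b
    by_cases hb : b = a <;> simp [hb, haJ]
  rw [hsdiff, card_insert_of_notMem (by simp), hg, pow_succ]
  ring

theorem sum_powerset_filter_superset {S U : Finset α} (hU : U ⊆ S) (g : Finset α → ℝ) :
    ∑ J ∈ S.powerset with U ⊆ J, (-1) ^ #(S \ J) * g J =
      altPowersetSum (S \ U) (fun K => g (U ∪ K)) := by
  symm
  refine sum_nbij' (U ∪ ·) (· \ U) ?_ ?_ ?_ ?_ ?_
  · intro K hK
    simp only [mem_powerset, mem_filter] at hK ⊢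
    exact ⟨union_subset hU (hK.trans sdiff_subset), subset_union_left⟩
  · intro J hJ
    simp only [mem_powerset, mem_filter] at hJ ⊢
    exact sdiff_subset_sdiff hJ.1 subset_rfl
  · intro K hK
    exact union_sdiff_cancel_left (disjoint_sdiff.mono_right (mem_powerset.mp hK))
  · intro J hJ
    exact union_sdiff_of_subset (mem_filter.mp hJ).2
  · intro K _
    rw [sdiff_sdiff_left]
    rfl

theorem altPowersetSum_sumOverSubsets_mul (S : Finset α) (y h : Finset α → ℝ) :
    altPowersetSum S (fun J => sumOverSubsets y J * h J) =
      ∑ I ∈ S.powerset, y I * altPowersetSum (S \ I) (fun K => h (I ∪ K)) := by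
  calc altPowersetSum S (fun J => sumOverSubsets y J * h J)
      = ∑ J ∈ S.powerset, ∑ I ∈ J.powerset, y I * ((-1) ^ #(S \ J) * h J) := by
        simp only [altPowersetSum, sumOverSubsets, sum_mul, mul_sum]
        refine sum_congr rfl fun _ _ => sum_congr rfl fun _ _ => by ring
    _ = ∑ I ∈ S.powerset, ∑ J ∈ S.powerset with I ⊆ J, y I * ((-1) ^ #(S \ J) * h J) :=
        sum_comm' fun J I => by
          simp only [mem_powerset, mem_filter]
          exact ⟨fun h => ⟨h, h.2.trans h.1⟩, fun h => h.1⟩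
    _ = _ := sum_congr rfl fun I hI => by
        rw [← mul_sum, sum_powerset_filter_superset (mem_powerset.mp hI)]

theorem altPowersetSum_univ [Fintype α] (g : Finset α → ℝ) :
    altPowersetSum univ g = (-1) ^ Fintype.card α * g ∅ +
      ∑ j ∈ Icc 1 (Fintype.card α), (-1) ^ (Fintype.card α - j) * ∑ J with #J = j, g J := by
  have hcard : ∀ J ∈ (univ : Finset (Finset α)), #J ∈ Icc 0 (Fintype.card α) := fun J _ =>
    mem_Icc.mpr ⟨Nat.zero_le _, card_le_univ J⟩
  rw [altPowersetSum, powerset_univ, ← sum_fiberwise_of_maps_to hcard,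
    ← add_sum_Ioc_eq_sum_Icc (Nat.zero_le _), ← Icc_add_one_left_eq_Ioc, zero_add]
  congr 1
  · simp [card_eq_zero, filter_eq']
  · refine sum_congr rfl fun j _ => ?_
    rw [mul_sum]
    refine sum_congr rfl fun J hJ => ?_
    rw [card_univ_sdiff, (mem_filter.mp hJ).2]

theorem hasDerivAt_altPowersetSum_rpow (S : Finset α) (A B : Finset α → ℝ) {r : ℝ} (hr : 1 ≤ r)
    (t : ℝ) :
    HasDerivAt (fun t => altPowersetSum S fun J => (A J + t * B J) ^ r)
      (r * altPowersetSum S fun J => B J * (A J + t * B J) ^ (r - 1)) t := by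
  simp only [altPowersetSum, mul_sum]
  refine HasDerivAt.fun_sum fun J _ => ?_
  exact ((((hasDerivAt_mul_const (B J)).const_add (A J)).rpow_const (Or.inr hr)).const_mul
    ((-1) ^ #(S \ J))).congr_deriv (by ring)

theorem altPowersetSum_sumOverSubsets_mul_rpow_nonneg {S : Finset α} {v w : Finset α → ℝ}
    (hv : ∀ I, 0 ≤ v I) (hv_empty : v ∅ = 0) (hw : ∀ I, 0 ≤ w I) {p : ℝ}
    (ih : ∀ T ⊂ S, ∀ w' : Finset α → ℝ, (∀ I, 0 ≤ w' I) →
      0 ≤ altPowersetSum T fun K => sumOverSubsets w' K ^ p) :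
    0 ≤ altPowersetSum S fun J => sumOverSubsets v J * sumOverSubsets w J ^ p := by
  rw [altPowersetSum_sumOverSubsets_mul]
  refine sum_nonneg fun I hI => ?_
  obtain rfl | hI_ne := I.eq_empty_or_nonempty
  · simp [hv_empty]
  refine mul_nonneg (hv I) ?_
  rw [altPowersetSum_congr fun K hK => by
    rw [sumOverSubsets_union (disjoint_of_subset_right hK disjoint_sdiff)]]
  exact ih _ (sdiff_ssubset (mem_powerset.mp hI) hI_ne) _
    fun _ => sumOverSubsets_nonneg (fun _ => hw _) I

theorem altPowersetSum_sumOverSubsets_rpow_nonneg_of_ssubset {S : Finset α} {a : α} (ha : a ∈ S)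
    {r : ℝ} (hr : 1 ≤ r) (ih : ∀ T ⊂ S, ∀ w : Finset α → ℝ, (∀ I, 0 ≤ w I) →
      0 ≤ altPowersetSum T fun K => sumOverSubsets w K ^ (r - 1))
    {x : Finset α → ℝ} (hx : ∀ I, 0 ≤ x I) :
    0 ≤ altPowersetSum S fun J => sumOverSubsets x J ^ r := by
  set u : Finset α → ℝ := fun I => if a ∈ I then 0 else x I
  set v : Finset α → ℝ := fun I => if a ∈ I then x I else 0
  have hu : ∀ I, 0 ≤ u I := fun I => by by_cases h : a ∈ I <;> simp [u, h, hx]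
  have hv : ∀ I, 0 ≤ v I := fun I => by by_cases h : a ∈ I <;> simp [v, h, hx]
  have hlin : ∀ t J, sumOverSubsets u J + t * sumOverSubsets v J =
      sumOverSubsets (fun I => u I + t * v I) J := fun t J => by
    simp only [sumOverSubsets, sum_add_distrib, mul_sum]
  set F : ℝ → ℝ := fun t => altPowersetSum S fun J =>
    (sumOverSubsets u J + t * sumOverSubsets v J) ^ r
  have hF := hasDerivAt_altPowersetSum_rpow S (sumOverSubsets u) (sumOverSubsets v) hr
  have hmono : MonotoneOn F (Set.Ici 0) := by
    refine monotoneOn_of_hasDerivWithinAt_nonneg (convex_Ici 0)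
      (fun t _ => (hF t).continuousAt.continuousWithinAt) (fun t _ => (hF t).hasDerivWithinAt)
      fun t ht => mul_nonneg (by linarith) ?_
    have ht : 0 ≤ t := le_of_lt (by simpa using ht)
    simp only [hlin]
    exact altPowersetSum_sumOverSubsets_mul_rpow_nonneg hv (by simp [v])
      (fun I => add_nonneg (hu I) (mul_nonneg ht (hv I))) ih
  have hF0 : F 0 = 0 := altPowersetSum_eq_zero_of_insert ha fun J => by
    simp only [zero_mul, add_zero]
    rw [sumOverSubsets_insert_of_eq_zero fun I h => by simp [u, h]]
  have hF1 : F 1 = altPowersetSum S fun J => sumOverSubsets x J ^ r := by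
    refine altPowersetSum_congr fun J _ => ?_
    rw [hlin]
    congr 2
    funext I
    by_cases h : a ∈ I <;> simp [u, v, h]
  rw [← hF1, ← hF0]
  exact hmono (Set.mem_Ici.mpr le_rfl) (Set.mem_Ici.mpr zero_le_one) zero_le_one

theorem altPowersetSum_sumOverSubsets_rpow_nonneg (S : Finset α) {x : Finset α → ℝ}
    (hx : ∀ I, 0 ≤ x I) {r : ℝ} (hr : (#S : ℝ) - 1 ≤ r) :
    0 ≤ altPowersetSum S fun J => sumOverSubsets x J ^ r := by
  induction S using Finset.strongInduction generalizing x r with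
  | H S ih =>
  obtain rfl | ⟨a, ha⟩ := S.eq_empty_or_nonempty
  · simpa [altPowersetSum] using Real.rpow_nonneg (sumOverSubsets_nonneg hx ∅) r
  by_cases hr1 : 1 ≤ r
  · refine altPowersetSum_sumOverSubsets_rpow_nonneg_of_ssubset ha hr1
      (fun T hT w hw => ih T hT hw ?_) hx
    have hcard : ((#T : ℕ) : ℝ) + 1 ≤ #S := by exact_mod_cast card_lt_card hT
    linarith
  · have hS : S = {a} := by
      refine eq_singleton_iff_unique_mem.mpr ⟨ha, fun b hb => ?_⟩
      have hcard : #S < 2 := by exact_mod_cast (show (#S : ℝ) < 2 by linarith)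
      exact card_le_one.mp (by omega) b hb a ha
    subst hS
    rw [altPowersetSum_singleton, sub_nonneg]
    exact Real.rpow_le_rpow (sumOverSubsets_nonneg hx ∅) (sumOverSubsets_mono hx (empty_subset _))
      (by simpa using hr)

end

theorem stmt_10 {m : ℕ} (x : Finset (Fin m) → ℝ)
    (hx : ∀ J : Finset (Fin m), J.Nonempty → 0 ≤ x J) (r : ℝ) (hr : (m : ℝ) - 1 ≤ r)
    (s : Finset (Fin m) → ℝ)
    (hs : ∀ J : Finset (Fin m), s J = ∑ I ∈ J.powerset.filter Finset.Nonempty, x I) :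
    0 ≤ ∑ j ∈ Finset.Icc 1 m, (-1 : ℝ) ^ (m - j) *
      ∑ J ∈ Finset.univ.filter (fun J : Finset (Fin m) => J.card = j), s J ^ r := by
  obtain rfl | hm := m.eq_zero_or_pos
  · simp
  set y : Finset (Fin m) → ℝ := fun I => if I.Nonempty then x I else 0
  have hy : ∀ I, 0 ≤ y I := fun I => by
    by_cases h : I.Nonempty <;> simp [y, h, hx]
  have hs_eq : ∀ J, sumOverSubsets y J = s J := fun J => by
    rw [hs, sum_filter]
    rfl
  have hmain := altPowersetSum_sumOverSubsets_rpow_nonneg univ hy (r := r) (by simpa using hr)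
  simp only [hs_eq, altPowersetSum_univ, Fintype.card_fin] at hmain
  have hempty : (-1 : ℝ) ^ m * s ∅ ^ r ≤ 0 := by
    rw [hs ∅, powerset_empty, filter_singleton, if_neg (by simp), sum_empty]
    rcases Nat.even_or_odd m with ⟨k, rfl⟩ | hm_odd
    · have hk : (1 : ℝ) ≤ k := by exact_mod_cast (show 1 ≤ k by omega)
      push_cast at hr
      rw [Real.zero_rpow (by linarith)]
      simp
    · rw [hm_odd.neg_one_pow]
      linarith [Real.rpow_nonneg le_rfl r]
  linarith
end

section
/- For m ≥ 3 and real r > 0, let f(m,r) = Σ_{j=1}^m (−1)^{m−j} C(m,j) j^r. Then f(m,r) = 0 for r = 1, 2, …, m−1; f(m,r) < 0 for m−2i < r < m−2i+1 with 1 ≤ i ≤ ⌊m/2⌋; and f(m,r) > 0 for m−2i−1 < r < m−2i with 1 ≤ i ≤ ⌊(m−1)/2⌋. -/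
/-! The sum is the `m`-th forward difference `Δ^m g 0` of `g x = x ^ r`. By the mean value theorem
for finite differences, `Δ^m g 0 = g⁽ᵐ⁾ ξ = r (r - 1) ⋯ (r - m + 1) ξ ^ (r - m)` for some
`ξ ∈ (0, m)`, so the sum has the sign of the falling factorial `r (r - 1) ⋯ (r - m + 1)`: it
vanishes at `r = 1, …, m - 1` and has sign `(-1) ^ (m - a - 1)` for `a < r < a + 1`. -/

open Set fwdDiff

section FwdDiffDeriv

variable {f : ℝ → ℝ} {a h : ℝ}

lemma continuousOn_fwdDiff_iter (hh : 0 ≤ h) (hf : ContinuousOn f (Ici a)) (n : ℕ) :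
    ContinuousOn ((Δ_[h])^[n] f) (Ici a) := by
  induction n with
  | zero => exact hf
  | succ n ih =>
    rw [Function.iterate_succ']
    refine ContinuousOn.sub (ih.comp (continuousOn_id.add continuousOn_const) ?_) ih
    intro t ht
    simp only [mem_Ici] at ht ⊢
    linarith

lemma hasDerivAt_fwdDiff_iter {f' : ℝ → ℝ} (hh : 0 ≤ h)
    (hf : ∀ t ∈ Ioi a, HasDerivAt f (f' t) t) (n : ℕ) :
    ∀ t ∈ Ioi a, HasDerivAt ((Δ_[h])^[n] f) ((Δ_[h])^[n] f' t) t := by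
  induction n with
  | zero => exact hf
  | succ n ih =>
    intro t ht
    simp only [Function.iterate_succ', Function.comp_apply, fwdDiff]
    have ht' : t + h ∈ Ioi a := by simp only [mem_Ioi] at ht ⊢; linarith
    exact ((ih _ ht').comp_add_const t h).sub (ih t ht)

lemma exists_fwdDiff_iter_succ_eq_fwdDiff_iter_deriv (hcont : ContinuousOn f (Ici a))
    (hdiff : DifferentiableOn ℝ f (Ioi a)) (n : ℕ) :
    ∃ c ∈ Ioo a (a + 1), (Δ_[1])^[n + 1] f a = (Δ_[1])^[n] (deriv f) c := by
  have hderiv : ∀ t ∈ Ioi a, HasDerivAt f (deriv f t) t := fun t ht ↦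
    (hdiff.differentiableAt (isOpen_Ioi.mem_nhds ht)).hasDerivAt
  obtain ⟨c, hc, hslope⟩ := exists_hasDerivAt_eq_slope ((Δ_[1])^[n] f) ((Δ_[1])^[n] (deriv f) ·)
    (lt_add_one a) ((continuousOn_fwdDiff_iter zero_le_one hcont n).mono Icc_subset_Ici_self)
    fun t ht ↦ hasDerivAt_fwdDiff_iter zero_le_one hderiv n t ht.1
  refine ⟨c, hc, ?_⟩
  rw [hslope, add_sub_cancel_left, div_one, Function.iterate_succ_apply']
  rfl

theorem exists_fwdDiff_iter_eq_iter_deriv (hcont : ContinuousOn f (Ici a))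
    (hdiff : ∀ k, DifferentiableOn ℝ (deriv^[k] f) (Ioi a)) (n : ℕ) :
    ∃ ξ ∈ Ioo a (a + (n + 1)), (Δ_[1])^[n + 1] f a = deriv^[n + 1] f ξ := by
  induction n generalizing f a with
  | zero =>
    simpa using exists_fwdDiff_iter_succ_eq_fwdDiff_iter_deriv hcont (hdiff 0) 0
  | succ n ih =>
    obtain ⟨c, hc, hfc⟩ := exists_fwdDiff_iter_succ_eq_fwdDiff_iter_deriv hcont (hdiff 0) (n + 1)
    have hcont' : ContinuousOn (deriv f) (Ici c) :=
      ((hdiff 1).mono (Ici_subset_Ioi.mpr hc.1)).continuousOn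
    obtain ⟨ξ, hξ, hξc⟩ := ih hcont' (fun k ↦ (hdiff (k + 1)).mono (Ioi_subset_Ioi hc.1.le))
    refine ⟨ξ, ⟨hc.1.trans hξ.1, ?_⟩, ?_⟩
    · push_cast; linarith [hξ.2, hc.2]
    · rw [hfc, hξc]; rfl

end FwdDiffDeriv

lemma sum_Icc_choose_mul_rpow_eq_fwdDiff_iter (m : ℕ) {r : ℝ} (hr : r ≠ 0) :
    ∑ j ∈ Finset.Icc 1 m, (-1 : ℝ) ^ (m - j) * (m.choose j : ℝ) * (j : ℝ) ^ r
      = (Δ_[1])^[m] (fun x : ℝ ↦ x ^ r) 0 := by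
  rw [fwdDiff_iter_eq_sum_shift, Finset.range_eq_Ico,
    Finset.sum_eq_sum_Ico_succ_bot (by omega : 0 < m + 1), Finset.Ico_add_one_right_eq_Icc]
  simp [Real.zero_rpow hr]

lemma exists_fwdDiff_iter_rpow_eq (n : ℕ) {r : ℝ} (hr : 0 < r) :
    ∃ ξ > 0, (Δ_[1])^[n + 1] (fun x : ℝ ↦ x ^ r) 0
      = (descPochhammer ℝ (n + 1)).eval r * ξ ^ (r - (n + 1 : ℕ)) := by
  have hdiff (k : ℕ) : DifferentiableOn ℝ (deriv^[k] fun x : ℝ ↦ x ^ r) (Ioi 0) := by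
    simp_rw [funext (Real.iter_deriv_rpow_const r · k)]
    exact fun t ht ↦ ((Real.differentiableAt_rpow_const_of_ne _ (ne_of_gt ht)).const_mul
      _).differentiableWithinAt
  obtain ⟨ξ, hξ, h⟩ := exists_fwdDiff_iter_eq_iter_deriv
    (Real.continuous_rpow_const hr.le).continuousOn hdiff n
  exact ⟨ξ, hξ.1, h.trans (Real.iter_deriv_rpow_const r ξ _)⟩

lemma neg_one_pow_mul_descPochhammer_eval_pos {a m : ℕ} (ham : a < m) {r : ℝ}
    (har : a < r) (hra : r < a + 1) :
    0 < (-1 : ℝ) ^ (m - (a + 1)) * (descPochhammer ℝ m).eval r := by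
  induction m, ham using Nat.le_induction with
  | base => simpa using descPochhammer_pos (by simpa using har)
  | succ m ham ih =>
    have hrm : r < m := hra.trans_le (by exact_mod_cast ham)
    rw [descPochhammer_succ_eval, Nat.sub_add_comm ham, pow_succ]
    nlinarith

lemma neg_one_pow_mul_sum_Icc_choose_mul_rpow_pos {a m : ℕ} (ham : a < m) {r : ℝ}
    (har : a < r) (hra : r < a + 1) :
    0 < (-1 : ℝ) ^ (m - (a + 1)) *
      ∑ j ∈ Finset.Icc 1 m, (-1 : ℝ) ^ (m - j) * (m.choose j : ℝ) * (j : ℝ) ^ r := by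
  have hr : 0 < r := lt_of_le_of_lt a.cast_nonneg har
  obtain ⟨n, rfl⟩ : ∃ n, m = n + 1 := ⟨m - 1, by omega⟩
  obtain ⟨ξ, hξ, h⟩ := exists_fwdDiff_iter_rpow_eq n hr
  rw [sum_Icc_choose_mul_rpow_eq_fwdDiff_iter _ hr.ne', h, ← mul_assoc]
  exact mul_pos (neg_one_pow_mul_descPochhammer_eval_pos ham har hra) (Real.rpow_pos_of_pos hξ _)

theorem stmt_11_general (m : ℕ) :
    (∀ r : ℕ, 1 ≤ r → r ≤ m - 1 →
      ∑ j ∈ Finset.Icc 1 m, (-1 : ℝ) ^ (m - j) * (m.choose j : ℝ) * (j : ℝ) ^ (r : ℝ) = 0) ∧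
    (∀ i : ℕ, 1 ≤ i → i ≤ m / 2 → ∀ r : ℝ, (m : ℝ) - 2 * i < r → r < (m : ℝ) - 2 * i + 1 →
      ∑ j ∈ Finset.Icc 1 m, (-1 : ℝ) ^ (m - j) * (m.choose j : ℝ) * (j : ℝ) ^ r < 0) ∧
    (∀ i : ℕ, 1 ≤ i → i ≤ (m - 1) / 2 → ∀ r : ℝ, (m : ℝ) - 2 * i - 1 < r → r < (m : ℝ) - 2 * i →
      0 < ∑ j ∈ Finset.Icc 1 m, (-1 : ℝ) ^ (m - j) * (m.choose j : ℝ) * (j : ℝ) ^ r) := by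
  refine ⟨fun r hr1 hrm ↦ ?_, fun i hi1 him r hr1 hr2 ↦ ?_, fun i hi1 him r hr1 hr2 ↦ ?_⟩
  · obtain ⟨n, rfl⟩ : ∃ n, m = n + 1 := ⟨m - 1, by omega⟩
    obtain ⟨ξ, -, h⟩ := exists_fwdDiff_iter_rpow_eq n (r := r) (by positivity)
    rw [sum_Icc_choose_mul_rpow_eq_fwdDiff_iter _ (by positivity), h,
      descPochhammer_eval_coe_nat_of_lt (by omega), zero_mul]
  · have h := neg_one_pow_mul_sum_Icc_choose_mul_rpow_pos (a := m - 2 * i) (m := m) (r := r)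
      (by omega) (by push_cast [Nat.cast_sub (by omega : 2 * i ≤ m)]; linarith)
      (by push_cast [Nat.cast_sub (by omega : 2 * i ≤ m)]; linarith)
    rwa [(show Odd (m - (m - 2 * i + 1)) from ⟨i - 1, by omega⟩).neg_one_pow, neg_one_mul,
      neg_pos] at h
  · have h := neg_one_pow_mul_sum_Icc_choose_mul_rpow_pos (a := m - (2 * i + 1)) (m := m) (r := r)
      (by omega) (by push_cast [Nat.cast_sub (by omega : 2 * i + 1 ≤ m)]; linarith)
      (by push_cast [Nat.cast_sub (by omega : 2 * i + 1 ≤ m)]; linarith)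
    rwa [(show Even (m - (m - (2 * i + 1) + 1)) from ⟨i, by omega⟩).neg_one_pow, one_mul] at h

theorem stmt_11 (m : ℕ) (hm : 3 ≤ m) :
    (∀ r : ℕ, 1 ≤ r → r ≤ m - 1 →
      ∑ j ∈ Finset.Icc 1 m, (-1 : ℝ) ^ (m - j) * (m.choose j : ℝ) * (j : ℝ) ^ (r : ℝ) = 0) ∧
    (∀ i : ℕ, 1 ≤ i → i ≤ m / 2 → ∀ r : ℝ, (m : ℝ) - 2 * i < r → r < (m : ℝ) - 2 * i + 1 →
      ∑ j ∈ Finset.Icc 1 m, (-1 : ℝ) ^ (m - j) * (m.choose j : ℝ) * (j : ℝ) ^ r < 0) ∧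
    (∀ i : ℕ, 1 ≤ i → i ≤ (m - 1) / 2 → ∀ r : ℝ, (m : ℝ) - 2 * i - 1 < r → r < (m : ℝ) - 2 * i →
      0 < ∑ j ∈ Finset.Icc 1 m, (-1 : ℝ) ^ (m - j) * (m.choose j : ℝ) * (j : ℝ) ^ r) :=
  stmt_11_general m
end

section
/- Let x_J ≥ 0 be indexed by nonempty subsets J of K = {1,…,m}, set s_J = Σ_{I ⊆ J, I ≠ ∅} x_I. For 3 ≤ p ≤ m and real r ≥ 2, define f(x) = (m−p)!(p−1)! Σ_{|J|=p} s_J^r + (m−p+2)!(p−3)! Σ_{|J|=p−2} s_J^r − 2(m−p+1)!(p−2)! Σ_{|J|=p−1} s_J^r. Then f(x) ≥ 0. -/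
open Finset

lemma lemA_step {ι : Type*} [DecidableEq ι] (S : Finset ι) (y : ι → ℝ) (t : ℝ)
    (ht : 0 ≤ t ∧ t ≤ 1) (hy : ∀ j ∈ S, 0 ≤ y j ∧ y j ≤ 1) :
    ∑ j ∈ S, (max (y j + t - 1) 0)^2
      ≤ (max (∑ j ∈ S, y j + t - 1) 0)^2 - (max (∑ j ∈ S, y j - 1) 0)^2 := by
  classical
  set τ : ℝ := ∑ j ∈ S, y j with hτ
  have hτ0 : 0 ≤ τ := Finset.sum_nonneg fun j hj => (hy j hj).1
  have hc0 : ∀ j ∈ S, 0 ≤ max (y j + t - 1) 0 := fun j hj => le_max_right _ _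
  have hsc0 : 0 ≤ ∑ j ∈ S, max (y j + t - 1) 0 := Finset.sum_nonneg hc0
  -- key bound
  have hkey : ∑ j ∈ S, max (y j + t - 1) 0 ≤ max (τ + t - 1) 0 := by
    set A := S.filter (fun j => 0 < y j + t - 1) with hA
    have h1 : ∑ j ∈ S, max (y j + t - 1) 0 = ∑ j ∈ A, (y j + t - 1) := by
      rw [hA, Finset.sum_filter]
      apply Finset.sum_congr rfl
      intro j _
      rcases lt_or_ge 0 (y j + t - 1) with h | h
      · simp [h, max_eq_left h.le]
      · simp [not_lt.2 h, max_eq_right h]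
    rcases A.eq_empty_or_nonempty with hAe | hAne
    · rw [h1, hAe]; simp
    · have hcard : (1:ℝ) ≤ (A.card : ℝ) := by
        exact_mod_cast Nat.one_le_iff_ne_zero.2 (Finset.card_ne_zero_of_mem hAne.choose_spec)
      have h2 : ∑ j ∈ A, (y j + t - 1) = ∑ j ∈ A, y j + (A.card : ℝ) * (t - 1) := by
        simp only [add_sub_assoc]
        rw [Finset.sum_add_distrib, Finset.sum_const, nsmul_eq_mul]
      have h3 : ∑ j ∈ A, y j ≤ τ :=
        Finset.sum_le_sum_of_subset_of_nonneg (Finset.filter_subset _ _)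
          (fun j hj _ => (hy j hj).1)
      have h4 : (A.card : ℝ) * (t - 1) ≤ 1 * (t - 1) :=
        mul_le_mul_of_nonpos_right hcard (by linarith [ht.2])
      have : ∑ j ∈ A, (y j + t - 1) ≤ τ + t - 1 := by rw [h2]; linarith
      rw [h1]
      exact le_trans this (le_max_left _ _)
  rcases le_or_gt (τ + t) 1 with h2 | h2
  · have hz : ∀ j ∈ S, (max (y j + t - 1) 0)^2 = 0 := by
      intro j hj
      have : y j ≤ τ := Finset.single_le_sum (fun k hk => (hy k hk).1) hj
      rw [max_eq_right (by linarith)]; ring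
    rw [Finset.sum_congr rfl hz, Finset.sum_const, smul_zero]
    rw [max_eq_right (by linarith), max_eq_right (by linarith [ht.1])]
    norm_num
  · have hmax1 : max (τ + t - 1) 0 = τ + t - 1 := max_eq_left (by linarith)
    rw [hmax1] at hkey
    rcases le_or_gt τ 1 with h1 | h1
    · rw [hmax1, max_eq_right (by linarith)]
      have hsq : ∑ j ∈ S, (max (y j + t - 1) 0)^2
          ≤ (∑ j ∈ S, max (y j + t - 1) 0)^2 := by
        calc ∑ j ∈ S, (max (y j + t - 1) 0)^2
            ≤ ∑ j ∈ S, (max (y j + t - 1) 0) * (∑ k ∈ S, max (y k + t - 1) 0) := by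
              apply Finset.sum_le_sum
              intro j hj
              have hle : max (y j + t - 1) 0 ≤ ∑ k ∈ S, max (y k + t - 1) 0 :=
                Finset.single_le_sum hc0 hj
              nlinarith [hc0 j hj]
          _ = (∑ j ∈ S, max (y j + t - 1) 0)^2 := by rw [← Finset.sum_mul]; ring
      nlinarith [hkey, hsc0]
    · rw [hmax1, max_eq_left (by linarith)]
      have hsq : ∑ j ∈ S, (max (y j + t - 1) 0)^2 ≤ t * ∑ j ∈ S, max (y j + t - 1) 0 := by
        rw [Finset.mul_sum]
        apply Finset.sum_le_sum
        intro j hj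
        have h5 : max (y j + t - 1) 0 ≤ t := max_le (by linarith [(hy j hj).2]) ht.1
        nlinarith [hc0 j hj]
      have h6 : t * ∑ j ∈ S, max (y j + t - 1) 0 ≤ t * (τ + t - 1) :=
        mul_le_mul_of_nonneg_left hkey ht.1
      nlinarith [ht.1]

lemma lemA {ι : Type*} [DecidableEq ι] (T : Finset ι) (y : ι → ℝ)
    (hy : ∀ j ∈ T, 0 ≤ y j ∧ y j ≤ 1) :
    ∑ j ∈ T, ∑ k ∈ T.erase j, (max (y j + y k - 1) 0)^2
      ≤ 2 * (max (∑ j ∈ T, y j - 1) 0)^2 := by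
  classical
  induction T using Finset.induction_on with
  | empty => simp
  | @insert t S hts ih =>
    have hyS : ∀ j ∈ S, 0 ≤ y j ∧ y j ≤ 1 := fun j hj => hy j (mem_insert_of_mem hj)
    have hyt : 0 ≤ y t ∧ y t ≤ 1 := hy t (mem_insert_self t S)
    rw [Finset.sum_insert hts, Finset.erase_insert hts]
    have hsplit : ∑ j ∈ S, ∑ k ∈ (insert t S).erase j, (max (y j + y k - 1) 0)^2
        = ∑ j ∈ S, ((max (y j + y t - 1) 0)^2 + ∑ k ∈ S.erase j, (max (y j + y k - 1) 0)^2) := by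
      apply Finset.sum_congr rfl
      intro j hj
      rw [Finset.erase_insert_of_ne (Ne.symm (ne_of_mem_of_not_mem hj hts))]
      rw [Finset.sum_insert (fun h => hts (Finset.mem_of_mem_erase h))]
    have hIH := ih hyS
    have hstep := lemA_step S y (y t) hyt hyS
    have hrw : ∑ j ∈ insert t S, y j = y t + ∑ j ∈ S, y j := Finset.sum_insert hts
    rw [hrw, hsplit, Finset.sum_add_distrib]
    have hsym : ∑ j ∈ S, (max (y j + y t - 1) 0)^2 = ∑ k ∈ S, (max (y t + y k - 1) 0)^2 := by
      apply Finset.sum_congr rfl; intro j _; ring_nf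
    have heq : (max (∑ j ∈ S, y j + y t - 1) 0)^2 = (max (y t + ∑ j ∈ S, y j - 1) 0)^2 := by
      ring_nf
    rw [heq] at hstep
    nlinarith [hstep, hIH]

lemma max_sq_le_sq (w : ℝ) : (max w 0)^2 ≤ w^2 := by
  rcases le_total w 0 with h | h
  · rw [max_eq_right h]; nlinarith
  · rw [max_eq_left h]

lemma max_sq_split (w : ℝ) : (max w 0)^2 = w^2 - (max (-w) 0)^2 := by
  rcases le_total w 0 with h | h
  · rw [max_eq_right h, max_eq_left (by linarith)]; ring
  · rw [max_eq_left h, max_eq_right (by linarith)]; ring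

lemma sum_quad {ι : Type*} (T : Finset ι) (x : ι → ℝ) (α β γ : ℝ) :
    ∑ j ∈ T, (α + β * x j + γ * (x j)^2)
      = α * T.card + β * (∑ j ∈ T, x j) + γ * (∑ j ∈ T, (x j)^2) := by
  rw [Finset.sum_add_distrib, Finset.sum_add_distrib, Finset.sum_const, nsmul_eq_mul,
    ← Finset.mul_sum, ← Finset.mul_sum]
  ring

lemma core_scalar {ι : Type*} [DecidableEq ι] (T : Finset ι) (x : ι → ℝ)
    (hx : ∀ j ∈ T, 0 ≤ x j ∧ x j ≤ 1) :
    2 * ((T.card : ℝ) - 2) * ∑ j ∈ T, (x j)^2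
      ≤ ∑ j ∈ T, ∑ k ∈ T.erase j, (max (x j + x k - 1) 0)^2
        + ((T.card : ℝ) - 1) * ((T.card : ℝ) - 2) := by
  classical
  have hinner : ∀ j ∈ T, ∑ k ∈ T.erase j, (x j + x k - 1)^2
      = ((x j - 1)^2) * ((T.card : ℝ) - 1) + (2*(x j - 1)) * ((∑ i ∈ T, x i) - x j)
        + ((∑ i ∈ T, (x i)^2) - (x j)^2) := by
    intro j hj
    have h1 : ∀ k, (x j + x k - 1)^2 = ((x j - 1)^2) + (2*(x j - 1)) * x k + 1*(x k)^2 :=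
      fun k => by ring
    rw [Finset.sum_congr rfl (fun k _ => h1 k), sum_quad,
      Finset.card_erase_of_mem hj, Finset.sum_erase_eq_sub hj, Finset.sum_erase_eq_sub hj]
    have hc : ((T.card - 1 : ℕ) : ℝ) = (T.card : ℝ) - 1 := by
      have : 1 ≤ T.card := Finset.card_pos.2 ⟨j, hj⟩
      rw [Nat.cast_sub this, Nat.cast_one]
    rw [hc]; ring
  have hdouble : ∑ j ∈ T, ∑ k ∈ T.erase j, (x j + x k - 1)^2
      = 2*((T.card : ℝ)-2)*(∑ i ∈ T, (x i)^2) + 2*(∑ i ∈ T, x i)^2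
        + (T.card : ℝ)*((T.card : ℝ)-1) - 4*((T.card : ℝ)-1)*(∑ i ∈ T, x i) := by
    rw [Finset.sum_congr rfl hinner]
    have h2 : ∀ j ∈ T, ((x j - 1)^2) * ((T.card : ℝ) - 1) + (2*(x j - 1)) * ((∑ i ∈ T, x i) - x j)
        + ((∑ i ∈ T, (x i)^2) - (x j)^2)
        = ((∑ i ∈ T, (x i)^2) + (T.card : ℝ) - 1 - 2*(∑ i ∈ T, x i))
          + (2*(∑ i ∈ T, x i) - 2*(T.card : ℝ) + 4) * x j + ((T.card : ℝ) - 4)*(x j)^2 :=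
      fun j _ => by ring
    rw [Finset.sum_congr rfl h2, sum_quad]
    ring
  have hmaxsplit : ∀ j ∈ T, ∀ k ∈ T.erase j, (max (x j + x k - 1) 0)^2
      = (x j + x k - 1)^2 - (max ((1 - x j) + (1 - x k) - 1) 0)^2 := by
    intro j _ k _
    have harg : -(x j + x k - 1) = (1 - x j) + (1 - x k) - 1 := by ring
    rw [max_sq_split, harg]
  have hE1 : ∑ j ∈ T, ∑ k ∈ T.erase j, (max (x j + x k - 1) 0)^2
      = ∑ j ∈ T, ∑ k ∈ T.erase j, (x j + x k - 1)^2
        - ∑ j ∈ T, ∑ k ∈ T.erase j, (max ((1 - x j) + (1 - x k) - 1) 0)^2 := by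
    rw [← Finset.sum_sub_distrib]
    apply Finset.sum_congr rfl
    intro j hj
    rw [← Finset.sum_sub_distrib]
    exact Finset.sum_congr rfl fun k hk => hmaxsplit j hj k hk
  have hyb : ∀ j ∈ T, 0 ≤ 1 - x j ∧ 1 - x j ≤ 1 := by
    intro j hj; constructor <;> linarith [(hx j hj).1, (hx j hj).2]
  have hA := lemA T (fun j => 1 - x j) hyb
  have hysum : ∑ j ∈ T, (1 - x j) = (T.card : ℝ) - ∑ j ∈ T, x j := by
    rw [Finset.sum_sub_distrib, Finset.sum_const, nsmul_eq_mul, mul_one]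
  rw [hysum] at hA
  have hA2 : ∑ j ∈ T, ∑ k ∈ T.erase j, (max ((1 - x j) + (1 - x k) - 1) 0)^2
      ≤ 2 * ((T.card : ℝ) - (∑ j ∈ T, x j) - 1)^2 :=
    le_trans hA (by nlinarith [max_sq_le_sq ((T.card : ℝ) - (∑ j ∈ T, x j) - 1)])
  nlinarith [hE1, hdouble, hA2]

lemma lemB {ι : Type*} [DecidableEq ι] (T : Finset ι) (b : ℝ) (c : ι → ℝ) (a : ι → ι → ℝ)
    (hb : 0 ≤ b) (hc : ∀ j ∈ T, 0 ≤ c j ∧ c j ≤ b)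
    (ha : ∀ j ∈ T, ∀ k ∈ T.erase j, 0 ≤ a j k ∧ c j + c k ≤ a j k + b) :
    2 * ((T.card : ℝ) - 2) * ∑ j ∈ T, (c j)^2
      ≤ ∑ j ∈ T, ∑ k ∈ T.erase j, (a j k)^2
        + ((T.card : ℝ) - 1) * ((T.card : ℝ) - 2) * b^2 := by
  classical
  rcases eq_or_lt_of_le hb with hb0 | hb0
  · -- b = 0 : all c j = 0
    have hc0 : ∀ j ∈ T, c j = 0 := fun j hj =>
      le_antisymm (hb0 ▸ (hc j hj).2) (hc j hj).1
    have h1 : ∑ j ∈ T, (c j)^2 = 0 := by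
      apply Finset.sum_eq_zero; intro j hj; rw [hc0 j hj]; ring
    rw [h1, ← hb0]
    have h2 : (0:ℝ) ≤ ∑ j ∈ T, ∑ k ∈ T.erase j, (a j k)^2 :=
      Finset.sum_nonneg fun j hj => Finset.sum_nonneg fun k hk => sq_nonneg _
    nlinarith
  · set x : ι → ℝ := fun j => c j / b with hxdef
    have hx : ∀ j ∈ T, 0 ≤ x j ∧ x j ≤ 1 := by
      intro j hj
      constructor
      · exact div_nonneg (hc j hj).1 hb
      · rw [div_le_one hb0]; exact (hc j hj).2
    have hcore := core_scalar T x hx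
    have hcx : ∀ j ∈ T, (c j)^2 = b^2 * (x j)^2 := by
      intro j hj
      rw [hxdef]; field_simp
    have hax : ∀ j ∈ T, ∀ k ∈ T.erase j, b^2 * (max (x j + x k - 1) 0)^2 ≤ (a j k)^2 := by
      intro j hj k hk
      have h3 : b * max (x j + x k - 1) 0 ≤ a j k := by
        rw [mul_max_of_nonneg _ _ hb, mul_zero]
        apply max_le _ (ha j hj k hk).1
        have : b * (x j + x k - 1) = c j + c k - b := by
          rw [hxdef]; field_simp; try ring
        linarith [(ha j hj k hk).2, this.le, this.ge]
      have h4 : 0 ≤ b * max (x j + x k - 1) 0 :=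
        mul_nonneg hb (le_max_right _ _)
      nlinarith
    have hsum1 : ∑ j ∈ T, (c j)^2 = b^2 * ∑ j ∈ T, (x j)^2 := by
      rw [Finset.mul_sum]; exact Finset.sum_congr rfl hcx
    have hsum2 : b^2 * ∑ j ∈ T, ∑ k ∈ T.erase j, (max (x j + x k - 1) 0)^2
        ≤ ∑ j ∈ T, ∑ k ∈ T.erase j, (a j k)^2 := by
      rw [Finset.mul_sum]
      apply Finset.sum_le_sum
      intro j hj
      rw [Finset.mul_sum]
      exact Finset.sum_le_sum fun k hk => hax j hj k hk
    have hb2 : (0:ℝ) ≤ b^2 := sq_nonneg b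
    nlinarith [mul_le_mul_of_nonneg_left hcore hb2]

lemma reindex {m q : ℕ} (hq : 1 ≤ q) (hqm : q ≤ m) (f : Finset (Fin m) → ℝ) :
    ∑ B ∈ Finset.univ.powersetCard q, ∑ j ∈ B, f (B.erase j)
      = ((m - q + 1 : ℕ) : ℝ) * ∑ C ∈ Finset.univ.powersetCard (q-1), f C := by
  classical
  have lhs_eq : ∑ B ∈ Finset.univ.powersetCard q, ∑ j ∈ B, f (B.erase j)
      = ∑ x ∈ (Finset.univ.powersetCard q).sigma (fun B => B), f (x.1.erase x.2) :=
    Finset.sum_sigma' _ _ _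
  have rhs_eq : ∑ C ∈ Finset.univ.powersetCard (q-1), ∑ j ∈ Cᶜ, f C
      = ∑ x ∈ (Finset.univ.powersetCard (q-1)).sigma (fun C => Cᶜ), f x.1 :=
    Finset.sum_sigma' _ _ _
  have key : ∑ x ∈ (Finset.univ.powersetCard q).sigma (fun B => B), f (x.1.erase x.2)
      = ∑ x ∈ (Finset.univ.powersetCard (q-1)).sigma (fun C => Cᶜ), f x.1 := by
    apply Finset.sum_nbij' (i := fun x => ⟨x.1.erase x.2, x.2⟩)
      (j := fun x => ⟨insert x.2 x.1, x.2⟩)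
    · rintro ⟨B, j⟩ hx
      rw [Finset.mem_sigma] at hx
      rw [Finset.mem_sigma]
      have hB : B.card = q := (Finset.mem_powersetCard_univ).1 hx.1
      constructor
      · rw [Finset.mem_powersetCard_univ, Finset.card_erase_of_mem hx.2, hB]
      · rw [Finset.mem_compl]; exact Finset.notMem_erase _ _
    · rintro ⟨C, j⟩ hx
      rw [Finset.mem_sigma] at hx
      rw [Finset.mem_sigma]
      have hC : C.card = q - 1 := (Finset.mem_powersetCard_univ).1 hx.1
      have hj : j ∉ C := Finset.mem_compl.1 hx.2
      constructor
      · rw [Finset.mem_powersetCard_univ, Finset.card_insert_of_notMem hj, hC]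
        omega
      · exact Finset.mem_insert_self _ _
    · rintro ⟨B, j⟩ hx
      rw [Finset.mem_sigma] at hx
      simp only [Sigma.mk.inj_iff, heq_eq_eq]
      exact ⟨Finset.insert_erase hx.2, trivial⟩
    · rintro ⟨C, j⟩ hx
      rw [Finset.mem_sigma] at hx
      simp only [Sigma.mk.inj_iff, heq_eq_eq]
      exact ⟨Finset.erase_insert (Finset.mem_compl.1 hx.2), trivial⟩
    · rintro ⟨B, j⟩ _
      rfl
  rw [lhs_eq, key, ← rhs_eq]
  rw [Finset.mul_sum]
  apply Finset.sum_congr rfl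
  intro C hC
  rw [Finset.sum_const, nsmul_eq_mul, Finset.card_compl]
  have hC' : C.card = q - 1 := (Finset.mem_powersetCard_univ).1 hC
  rw [hC', Fintype.card_fin]
  congr 2
  omega

lemma rpow_pair {q a b c d : ℝ} (hq : 1 ≤ q) (ha : 0 ≤ a) (hac : a ≤ c) (had : a ≤ d)
    (hcb : c ≤ b) (hdb : d ≤ b) (hsum : c + d ≤ a + b) :
    c ^ q + d ^ q ≤ a ^ q + b ^ q := by
  have hc0 : 0 ≤ c := le_trans ha hac
  have hd0 : 0 ≤ d := le_trans ha had
  have hb0 : 0 ≤ b := le_trans hc0 hcb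
  have h1 : d ^ q ≤ (a + b - c) ^ q :=
    Real.rpow_le_rpow hd0 (by linarith) (by linarith)
  have h2 : c ^ q + (a + b - c) ^ q ≤ a ^ q + b ^ q := by
    rcases eq_or_lt_of_le (le_trans hac hcb) with hab | hab
    · have hca : c = a := le_antisymm (hab ▸ hcb) hac
      rw [← hca]
      have h5 : c + b - c = b := by ring
      rw [h5]
    · set l : ℝ := (b - c) / (b - a) with hl
      have hba : 0 < b - a := by linarith
      have hl0 : 0 ≤ l := div_nonneg (by linarith) hba.le
      have hl1 : 0 ≤ 1 - l := by
        rw [hl, sub_nonneg, div_le_one hba]; linarith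
      have hcvx := convexOn_rpow hq
      have hmem_a : a ∈ Set.Ici (0:ℝ) := ha
      have hmem_b : b ∈ Set.Ici (0:ℝ) := hb0
      have e1 : l * a + (1 - l) * b = c := by
        rw [hl]; field_simp; ring
      have e2 : (1 - l) * a + l * b = a + b - c := by
        rw [hl]; field_simp; ring
      have h3 := hcvx.2 hmem_a hmem_b hl0 hl1 (by ring)
      have h4 := hcvx.2 hmem_a hmem_b hl1 hl0 (by ring)
      simp only [smul_eq_mul] at h3 h4
      rw [e1] at h3
      rw [e2] at h4
      linarith
  linarith


theorem stmt_14 {m : ℕ} (x : Finset (Fin m) → ℝ)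
    (hx : ∀ J : Finset (Fin m), J.Nonempty → 0 ≤ x J)
    (s : Finset (Fin m) → ℝ)
    (hs : ∀ J : Finset (Fin m), s J = ∑ I ∈ J.powerset.filter Finset.Nonempty, x I)
    (p : ℕ) (hp3 : 3 ≤ p) (hpm : p ≤ m) (r : ℝ) (hr : 2 ≤ r) :
    0 ≤ ((m - p).factorial : ℝ) * ((p - 1).factorial : ℝ) *
          ∑ J ∈ Finset.univ.filter (fun J : Finset (Fin m) => J.card = p), s J ^ r
        + ((m - p + 2).factorial : ℝ) * ((p - 3).factorial : ℝ) *
          ∑ J ∈ Finset.univ.filter (fun J : Finset (Fin m) => J.card = p - 2), s J ^ r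
        - 2 * ((m - p + 1).factorial : ℝ) * ((p - 2).factorial : ℝ) *
          ∑ J ∈ Finset.univ.filter (fun J : Finset (Fin m) => J.card = p - 1), s J ^ r := by
  classical
  -- basic facts about s
  have hs0 : ∀ J, 0 ≤ s J := by
    intro J
    rw [hs]
    exact Finset.sum_nonneg fun I hI => hx I (Finset.mem_filter.1 hI).2
  have hmono : ∀ X Y : Finset (Fin m), X ⊆ Y → s X ≤ s Y := by
    intro X Y hXY
    rw [hs, hs]
    apply Finset.sum_le_sum_of_subset_of_nonneg
    · exact Finset.filter_subset_filter _ (Finset.powerset_mono.2 hXY)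
    · exact fun I hI _ => hx I (Finset.mem_filter.1 hI).2
  have hsuper : ∀ B : Finset (Fin m), ∀ j ∈ B, ∀ k ∈ B.erase j,
      s (B.erase j) + s (B.erase k) ≤ s ((B.erase j).erase k) + s B := by
    intro B j hj k hk
    have hkj : k ≠ j := Finset.ne_of_mem_erase hk
    have e1 : (B.erase j).powerset.filter Finset.Nonempty
        = (B.powerset.filter Finset.Nonempty).filter (fun I => j ∉ I) := by
      ext I
      simp only [Finset.mem_filter, Finset.mem_powerset, Finset.subset_erase]
      tauto
    have e2 : (B.erase k).powerset.filter Finset.Nonempty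
        = (B.powerset.filter Finset.Nonempty).filter (fun I => k ∉ I) := by
      ext I
      simp only [Finset.mem_filter, Finset.mem_powerset, Finset.subset_erase]
      tauto
    have e3 : ((B.erase j).erase k).powerset.filter Finset.Nonempty
        = (B.powerset.filter Finset.Nonempty).filter (fun I => j ∉ I ∧ k ∉ I) := by
      ext I
      simp only [Finset.mem_filter, Finset.mem_powerset, Finset.subset_erase]
      tauto
    rw [hs (B.erase j), hs (B.erase k), hs ((B.erase j).erase k), hs B, e1, e2, e3]
    set P := B.powerset.filter Finset.Nonempty with hP
    have hui := Finset.sum_union_inter (s₁ := P.filter (fun I => j ∉ I))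
      (s₂ := P.filter (fun I => k ∉ I)) (f := x)
    have hint : P.filter (fun I => j ∉ I) ∩ P.filter (fun I => k ∉ I)
        = P.filter (fun I => j ∉ I ∧ k ∉ I) := by
      ext I
      simp only [Finset.mem_inter, Finset.mem_filter]
      tauto
    rw [hint] at hui
    have hsub : ∑ I ∈ (P.filter (fun I => j ∉ I) ∪ P.filter (fun I => k ∉ I)), x I
        ≤ ∑ I ∈ P, x I := by
      apply Finset.sum_le_sum_of_subset_of_nonneg
      · exact Finset.union_subset (Finset.filter_subset _ _) (Finset.filter_subset _ _)
      · exact fun I hI _ => hx I (Finset.mem_filter.1 hI).2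
    linarith [hui, hsub]
  -- the function g = s ^ (r/2)
  set g : Finset (Fin m) → ℝ := fun X => s X ^ (r/2) with hg
  have hq1 : 1 ≤ r/2 := by linarith
  have hg0 : ∀ X, 0 ≤ g X := fun X => Real.rpow_nonneg (hs0 X) _
  have hgmono : ∀ X Y : Finset (Fin m), X ⊆ Y → g X ≤ g Y := fun X Y h =>
    Real.rpow_le_rpow (hs0 X) (hmono X Y h) (by linarith)
  have hgsq : ∀ X, (g X)^2 = s X ^ r := by
    intro X
    rw [hg]
    rw [← Real.rpow_natCast (s X ^ (r/2)) 2, ← Real.rpow_mul (hs0 X)]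
    norm_num
  -- per-B inequality
  have perB : ∀ B ∈ Finset.univ.powersetCard p,
      2 * ((p:ℝ) - 2) * ∑ j ∈ B, s (B.erase j) ^ r
        ≤ ∑ j ∈ B, ∑ k ∈ B.erase j, s ((B.erase j).erase k) ^ r
          + ((p:ℝ) - 1) * ((p:ℝ) - 2) * s B ^ r := by
    intro B hB
    have hBcard : B.card = p := Finset.mem_powersetCard_univ.1 hB
    have hlemB := lemB B (g B) (fun j => g (B.erase j)) (fun j k => g ((B.erase j).erase k))
      (hg0 B)
      (fun j hj => ⟨hg0 _, hgmono _ _ (Finset.erase_subset _ _)⟩)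
      (by
        intro j hj k hk
        refine ⟨hg0 _, ?_⟩
        have hcomm : (B.erase j).erase k = (B.erase k).erase j := Finset.erase_right_comm
        exact rpow_pair hq1 (hs0 ((B.erase j).erase k))
          (hmono _ _ (Finset.erase_subset _ _))
          (hcomm ▸ hmono ((B.erase k).erase j) (B.erase k) (Finset.erase_subset _ _))
          (hmono _ _ (Finset.erase_subset _ _))
          (hmono _ _ (Finset.erase_subset _ _))
          (hsuper B j hj k hk))
    rw [hBcard] at hlemB
    simp only [hgsq] at hlemB
    exact hlemB
  -- sum over B and reindex
  have hp1m : 1 ≤ p := by omega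
  have hp2 : 1 ≤ p - 1 := by omega
  have hp2m : p - 1 ≤ m := by omega
  set S0 : ℝ := ∑ J ∈ Finset.univ.powersetCard p, s J ^ r with hS0
  set S1 : ℝ := ∑ J ∈ Finset.univ.powersetCard (p-1), s J ^ r with hS1
  set S2 : ℝ := ∑ J ∈ Finset.univ.powersetCard (p-2), s J ^ r with hS2
  have hp12 : p - 1 - 1 = p - 2 := by omega
  have hsummed : 2 * ((p:ℝ) - 2) * (((m - p + 1 : ℕ):ℝ) * S1)
      ≤ ((m - p + 1 : ℕ):ℝ) * (((m - (p-1) + 1 : ℕ):ℝ) * S2)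
        + ((p:ℝ) - 1) * ((p:ℝ) - 2) * S0 := by
    have h1 := Finset.sum_le_sum perB
    rw [Finset.sum_add_distrib] at h1
    have h2 : ∑ B ∈ Finset.univ.powersetCard p, 2 * ((p:ℝ) - 2) * ∑ j ∈ B, s (B.erase j) ^ r
        = 2 * ((p:ℝ) - 2) * (((m - p + 1 : ℕ):ℝ) * S1) := by
      rw [← Finset.mul_sum, reindex hp1m hpm (fun C => s C ^ r)]
    have h3 : ∑ B ∈ Finset.univ.powersetCard p,
        ∑ j ∈ B, ∑ k ∈ B.erase j, s ((B.erase j).erase k) ^ r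
        = ((m - p + 1 : ℕ):ℝ) * (((m - (p-1) + 1 : ℕ):ℝ) * S2) := by
      rw [reindex hp1m hpm (fun C => ∑ k ∈ C, s (C.erase k) ^ r),
        reindex hp2 hp2m (fun C => s C ^ r), hp12]
    have h4 : ∑ B ∈ Finset.univ.powersetCard p, ((p:ℝ) - 1) * ((p:ℝ) - 2) * s B ^ r
        = ((p:ℝ) - 1) * ((p:ℝ) - 2) * S0 := by
      rw [← Finset.mul_sum]
    rw [h2, h3, h4] at h1
    exact h1
  -- convert filters to powersetCard in the goal
  have hfe : ∀ q : ℕ, Finset.univ.filter (fun J : Finset (Fin m) => J.card = q)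
      = Finset.univ.powersetCard q := by
    intro q
    ext J
    simp [Finset.mem_powersetCard_univ]
  rw [hfe p, hfe (p-2), hfe (p-1)]
  -- factorial manipulations
  have fac2 : ∀ n : ℕ, (n+2).factorial = (n+2)*(n+1)*n.factorial := by
    intro n
    rw [Nat.factorial_succ, Nat.factorial_succ]
    ring
  have hfac1n : (p-1).factorial = (p-1)*(p-2)*(p-3).factorial := by
    have h : p - 1 = (p-3) + 2 := by omega
    have h1 : p - 3 + 2 = p - 1 := by omega
    have h2 : p - 3 + 1 = p - 2 := by omega
    rw [h, fac2, h1, h2]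
  have hfac2n : (p-2).factorial = (p-2)*(p-3).factorial := by
    have h : p - 2 = (p-3) + 1 := by omega
    have h2 : p - 3 + 1 = p - 2 := by omega
    rw [h, Nat.factorial_succ, h2]
  have hfac3n : (m-p+2).factorial = (m-p+2)*(m-p+1)*(m-p).factorial := fac2 (m-p)
  have hfac4n : (m-p+1).factorial = (m-p+1)*(m-p).factorial := Nat.factorial_succ _
  have hfac1 : ((p - 1).factorial : ℝ)
      = ((p-1:ℕ):ℝ) * ((p-2:ℕ):ℝ) * ((p-3).factorial : ℝ) := by
    rw [hfac1n]; push_cast; ring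
  have hfac2 : ((p - 2).factorial : ℝ) = ((p-2:ℕ):ℝ) * ((p-3).factorial : ℝ) := by
    rw [hfac2n]; push_cast; ring
  have hfac3 : ((m - p + 2).factorial : ℝ)
      = ((m-p+2:ℕ):ℝ) * ((m-p+1:ℕ):ℝ) * ((m-p).factorial : ℝ) := by
    rw [hfac3n]; push_cast; ring
  have hfac4 : ((m - p + 1).factorial : ℝ)
      = ((m-p+1:ℕ):ℝ) * ((m-p).factorial : ℝ) := by
    rw [hfac4n]; push_cast; ring
  have cp1 : ((p-1:ℕ):ℝ) = (p:ℝ) - 1 := by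
    rw [Nat.cast_sub hp1m, Nat.cast_one]
  have cp2 : ((p-2:ℕ):ℝ) = (p:ℝ) - 2 := by
    have h2p : 2 ≤ p := by omega
    rw [Nat.cast_sub h2p]
    norm_num
  rw [← cp1, ← cp2] at hsummed
  have hcast : ((m - (p-1) + 1 : ℕ):ℝ) = ((m - p + 2 : ℕ):ℝ) := by
    congr 1
    omega
  rw [hcast] at hsummed
  rw [hfac1, hfac2, hfac3, hfac4]
  have hpos : (0:ℝ) ≤ ((m-p).factorial : ℝ) * ((p-3).factorial : ℝ) := by positivity
  nlinarith [mul_le_mul_of_nonneg_left hsummed hpos]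
end

section
/- Suppose A_i, B_i, C_i ∈ M_{n_i}(ℂ) are positive semidefinite for 1 ≤ i ≤ k. Then the Kronecker product satisfies ⊗_{i=1}^k (A_i+B_i+C_i) + ⊗_{i=1}^k A_i + ⊗_{i=1}^k B_i + ⊗_{i=1}^k C_i ≥ ⊗_{i=1}^k (A_i+B_i) + ⊗_{i=1}^k (A_i+C_i) + ⊗_{i=1}^k (B_i+C_i) in the Loewner order. -/
/-!
Expanding every Kronecker product multilinearly, `⊗ᵢ (∑_{t ∈ s} gₜ i)` is the sum of the
positive semidefinite products `⊗ᵢ g_{f i} i` over the maps `f : Fin k → {A, B, C}` whose range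
lies in `s`. By inclusion–exclusion over the range of `f`, each such product enters the difference
of the two sides with coefficient `1` when the range is everything or empty (only for `k = 0`), and `0`
otherwise.
-/

open ComplexOrder

/-- The Kronecker (tensor) product `⊗_{i=1}^k M_i` of a family of square matrices. -/
def famKron {k : ℕ} {n : Fin k → ℕ} (M : ∀ i, Matrix (Fin (n i)) (Fin (n i)) ℂ) :
    Matrix (∀ i, Fin (n i)) (∀ i, Fin (n i)) ℂ :=
  fun x y => ∏ i, M i (x i) (y i)

open Matrix Finset

section famKron

variable {k : ℕ} {n : Fin k → ℕ}

theorem famKron_mul (M N : ∀ i, Matrix (Fin (n i)) (Fin (n i)) ℂ) :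
    famKron (fun i => M i * N i) = famKron M * famKron N := by
  ext x y
  simp only [famKron, mul_apply, prod_univ_sum, Fintype.piFinset_univ, prod_mul_distrib]

theorem famKron_conjTranspose (M : ∀ i, Matrix (Fin (n i)) (Fin (n i)) ℂ) :
    famKron (fun i => (M i)ᴴ) = (famKron M)ᴴ := by
  ext x y
  simp only [famKron, conjTranspose_apply, star_prod]

open scoped MatrixOrder in
theorem Matrix.PosSemidef.famKron {M : ∀ i, Matrix (Fin (n i)) (Fin (n i)) ℂ}
    (hM : ∀ i, (M i).PosSemidef) : (famKron M).PosSemidef := by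
  choose N hN using fun i => CStarAlgebra.nonneg_iff_eq_star_mul_self.mp (hM i).nonneg
  simp only [funext hN, star_eq_conjTranspose, famKron_mul, famKron_conjTranspose]
  exact posSemidef_conjTranspose_mul_self _

theorem famKron_sum {ι : Type*} (g : ι → ∀ i, Matrix (Fin (n i)) (Fin (n i)) ℂ)
    (s : Finset ι) :
    famKron (fun i => ∑ t ∈ s, g t i) =
      ∑ f ∈ Fintype.piFinset fun _ => s, famKron fun i => g (f i) i := by
  ext x y
  simp only [famKron, Matrix.sum_apply, prod_univ_sum]

theorem famKron_sum_eq_sum_ite {ι : Type*} [Fintype ι] [DecidableEq ι]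
    (g : ι → ∀ i, Matrix (Fin (n i)) (Fin (n i)) ℂ) (s : Finset ι) :
    famKron (fun i => ∑ t ∈ s, g t i) =
      ∑ f : Fin k → ι, if univ.image f ⊆ s then famKron (fun i => g (f i) i) else 0 := by
  rw [famKron_sum, ← sum_filter]
  congr 1
  ext f
  simp [image_subset_iff]

end famKron

theorem ite_subset_inclusion_exclusion_fin_three {G : Type*} [AddCommGroup G]
    (R : Finset (Fin 3)) (X : G) :
    (if R ⊆ univ then X else 0) + (if R ⊆ {0} then X else 0) + (if R ⊆ {1} then X else 0)
      + (if R ⊆ {2} then X else 0) - (if R ⊆ {0, 1} then X else 0)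
      - (if R ⊆ {0, 2} then X else 0) - (if R ⊆ {1, 2} then X else 0)
      = if R = ∅ ∨ R = univ then X else 0 := by
  have key : ∀ R : Finset (Fin 3),
      ((if R ⊆ univ then 1 else 0) + (if R ⊆ {0} then 1 else 0) + (if R ⊆ {1} then 1 else 0)
      + (if R ⊆ {2} then 1 else 0) - (if R ⊆ {0, 1} then 1 else 0)
      - (if R ⊆ {0, 2} then 1 else 0) - (if R ⊆ {1, 2} then 1 else 0) : ℤ)
      = if R = ∅ ∨ R = univ then 1 else 0 := by decide
  have boole : ∀ (p : Prop) [Decidable p], (if p then X else 0) = (if p then (1 : ℤ) else 0) • X :=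
    fun p _ => by split_ifs <;> simp
  simp only [boole, ← add_smul, ← sub_smul, key R]

theorem stmt_18 {k : ℕ} {n : Fin k → ℕ}
    (A B C : ∀ i, Matrix (Fin (n i)) (Fin (n i)) ℂ)
    (hA : ∀ i, (A i).PosSemidef) (hB : ∀ i, (B i).PosSemidef)
    (hC : ∀ i, (C i).PosSemidef) :
    (famKron (fun i => A i + B i + C i) + famKron A + famKron B + famKron C
      - famKron (fun i => A i + B i) - famKron (fun i => A i + C i)
      - famKron (fun i => B i + C i)).PosSemidef := by
  classical
  set g : Fin 3 → ∀ i, Matrix (Fin (n i)) (Fin (n i)) ℂ := ![A, B, C]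
  have hg : ∀ t i, (g t i).PosSemidef := by
    intro t i
    fin_cases t
    exacts [hA i, hB i, hC i]
  have expansion : famKron (fun i => A i + B i + C i) + famKron A + famKron B + famKron C
      - famKron (fun i => A i + B i) - famKron (fun i => A i + C i)
      - famKron (fun i => B i + C i) =
      ∑ f : Fin k → Fin 3, if univ.image f = ∅ ∨ univ.image f = univ
        then famKron (fun i => g (f i) i) else 0 := calc
    _ = famKron (fun i => ∑ t ∈ univ, g t i) + famKron (fun i => ∑ t ∈ {0}, g t i)
        + famKron (fun i => ∑ t ∈ {1}, g t i) + famKron (fun i => ∑ t ∈ {2}, g t i)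
        - famKron (fun i => ∑ t ∈ {0, 1}, g t i) - famKron (fun i => ∑ t ∈ {0, 2}, g t i)
        - famKron (fun i => ∑ t ∈ {1, 2}, g t i) := by
      simp only [g, Fin.sum_univ_three, sum_singleton, sum_pair, ne_eq, Fin.reduceEq,
        not_false_eq_true, Matrix.cons_val]
    _ = _ := by
      simp only [famKron_sum_eq_sum_ite, ← sum_add_distrib, ← sum_sub_distrib,
        ite_subset_inclusion_exclusion_fin_three]
  rw [expansion]
  refine posSemidef_sum _ fun f _ => ?_
  split_ifs
  exacts [PosSemidef.famKron fun i => hg (f i) i, .zero]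
end

section
/- For positive semidefinite A, B ∈ M_n(ℂ) and any real q ≥ 1/n, det(A+B)^q ≥ det(A)^q + det(B)^q. -/
/-!
For `A` positive definite write `A = S²` with `S = √A` and `B = S C S` with `C = S⁻¹ B S⁻¹ ⪰ 0`.
If `λᵢ` are the eigenvalues of `C`, then `det B = det A · ∏ λᵢ` and
`det (A + B) = det A · ∏ (1 + λᵢ)`, so Minkowski's inequality
`det A ^ (1/n) + det B ^ (1/n) ≤ det (A + B) ^ (1/n)` reduces to
`1 + (∏ λᵢ) ^ (1/n) ≤ (∏ (1 + λᵢ)) ^ (1/n)`, which is AM–GM applied to `1 / (1 + λᵢ)` and to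
`λᵢ / (1 + λᵢ)`, summed. If neither matrix is invertible, both determinants vanish.
Finally `x ^ r + y ^ r ≤ (x + y) ^ r` for `r = q n ≥ 1` raises the exponent from `1/n` to `q`.
-/

open ComplexOrder Finset Matrix

namespace Real

variable {ι : Type*} [Fintype ι] [Nonempty ι]

theorem prod_rpow_inv_card_le_mul_sum (z : ι → ℝ) (hz : ∀ i, 0 ≤ z i) :
    (∏ i, z i) ^ (Fintype.card ι : ℝ)⁻¹ ≤ (Fintype.card ι : ℝ)⁻¹ * ∑ i, z i := by
  rw [← finsetProd_rpow _ _ fun i _ => hz i, mul_sum]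
  refine geom_mean_le_arith_mean_weighted _ _ _ (fun _ _ => by positivity) ?_ fun i _ => hz i
  simp

theorem one_add_prod_rpow_inv_card_le (l : ι → ℝ) (hl : ∀ i, 0 ≤ l i) :
    1 + (∏ i, l i) ^ (Fintype.card ι : ℝ)⁻¹ ≤ (∏ i, (1 + l i)) ^ (Fintype.card ι : ℝ)⁻¹ := by
  set w : ℝ := (Fintype.card ι : ℝ)⁻¹
  have hpos : ∀ i, 0 < 1 + l i := fun i => by linarith [hl i]
  have hP : 0 < ∏ i, (1 + l i) := prod_pos fun i _ => hpos i
  have h₁ := prod_rpow_inv_card_le_mul_sum (fun i => 1 / (1 + l i))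
    fun i => (one_div_pos.mpr (hpos i)).le
  have h₂ := prod_rpow_inv_card_le_mul_sum (fun i => l i / (1 + l i))
    fun i => div_nonneg (hl i) (hpos i).le
  have hsum : ∑ i, (1 / (1 + l i) + l i / (1 + l i)) = Fintype.card ι := by
    simp_rw [← add_div, div_self (hpos _).ne']
    simp
  rw [prod_div_distrib, prod_const_one, div_rpow zero_le_one hP.le, one_rpow] at h₁
  rw [prod_div_distrib, div_rpow (prod_nonneg fun i _ => hl i) hP.le] at h₂
  rw [← div_le_one (by positivity), add_div]
  calc 1 / (∏ i, (1 + l i)) ^ w + (∏ i, l i) ^ w / (∏ i, (1 + l i)) ^ w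
      ≤ w * ∑ i, 1 / (1 + l i) + w * ∑ i, l i / (1 + l i) := add_le_add h₁ h₂
    _ = 1 := by rw [← mul_add, ← sum_add_distrib, hsum, inv_mul_cancel₀ (by simp)]

theorem rpow_add_rpow_le_rpow_of_rpow_add_rpow_le {a b c p q : ℝ} (ha : 0 ≤ a) (hb : 0 ≤ b)
    (hc : 0 ≤ c) (hp : 0 < p) (hpq : p ≤ q) (h : a ^ p + b ^ p ≤ c ^ p) :
    a ^ q + b ^ q ≤ c ^ q := by
  have hpow : ∀ x : ℝ, 0 ≤ x → x ^ q = (x ^ p) ^ (q / p) := fun x hx => by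
    rw [← rpow_mul hx, mul_div_cancel₀ _ hp.ne']
  have hqp : 1 ≤ q / p := (one_le_div hp).mpr hpq
  rw [hpow a ha, hpow b hb, hpow c hc]
  calc (a ^ p) ^ (q / p) + (b ^ p) ^ (q / p) ≤ (a ^ p + b ^ p) ^ (q / p) :=
        add_rpow_le_rpow_add (by positivity) (by positivity) hqp
    _ ≤ (c ^ p) ^ (q / p) := rpow_le_rpow (by positivity) h (by linarith)

end Real

namespace Matrix

variable {𝕜 : Type*} [RCLike 𝕜] {m : Type*} [Fintype m] [DecidableEq m]

theorem IsHermitian.det_cfc {A : Matrix m m 𝕜} (hA : A.IsHermitian) (f : ℝ → ℝ) :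
    (cfc f A).det = ∏ i, (f (hA.eigenvalues i) : 𝕜) := by
  rw [hA.cfc_eq, IsHermitian.cfc, Unitary.conjStarAlgAut_apply, det_mul_right_comm, det_mul,
    ← det_mul, Unitary.mul_star_self_of_mem hA.eigenvectorUnitary.2, Matrix.one_mul,
    det_diagonal]
  rfl

theorem IsHermitian.det_one_add {A : Matrix m m 𝕜} (hA : A.IsHermitian) :
    (1 + A).det = ∏ i, (1 + hA.eigenvalues i : 𝕜) := by
  have h : 1 + A = cfc (fun x : ℝ => 1 + x) A := by
    rw [cfc_const_add (1 : ℝ) (fun x => x) A, cfc_id' ℝ A, map_one]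
  rw [h, hA.det_cfc]
  push_cast
  rfl

open scoped MatrixOrder in
theorem PosDef.exists_det_eq_mul_prod {A B : Matrix m m 𝕜} (hA : A.PosDef) (hB : B.PosSemidef) :
    ∃ l : m → ℝ, (∀ i, 0 ≤ l i) ∧ B.det = A.det * (∏ i, l i : ℝ) ∧
      (A + B).det = A.det * (∏ i, (1 + l i) : ℝ) := by
  set S := CFC.sqrt A
  have hS : S.IsHermitian := (CFC.sqrt_nonneg A).posSemidef.isHermitian
  have hSS : S * S = A := CFC.sqrt_mul_sqrt_self A hA.posSemidef.nonneg
  have hdetA : A.det = S.det * S.det := by rw [← hSS, det_mul]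
  have hSunit : IsUnit S.det :=
    isUnit_of_mul_isUnit_left (hdetA ▸ (isUnit_iff_isUnit_det A).mp hA.isUnit)
  set C := S⁻¹ * B * S⁻¹
  have hC : C.PosSemidef := by
    simpa [conjTranspose_nonsing_inv, hS.eq] using hB.conjTranspose_mul_mul_same S⁻¹
  have hB_eq : B = S * C * S := by
    simp only [C, ← Matrix.mul_assoc, mul_nonsing_inv S hSunit, Matrix.one_mul]
    rw [Matrix.mul_assoc, nonsing_inv_mul S hSunit, Matrix.mul_one]
  have hAB_eq : A + B = S * (1 + C) * S := by
    rw [hB_eq, ← hSS, Matrix.mul_add, Matrix.mul_one, Matrix.add_mul]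
  refine ⟨hC.1.eigenvalues, hC.eigenvalues_nonneg, ?_, ?_⟩ <;> push_cast
  · rw [← hC.1.det_eq_prod_eigenvalues, hB_eq, det_mul, det_mul, hdetA]
    ring
  · rw [← hC.1.det_one_add, hAB_eq, det_mul, det_mul, hdetA]
    ring

theorem PosSemidef.re_det_nonneg {A : Matrix m m 𝕜} (hA : A.PosSemidef) : 0 ≤ RCLike.re A.det :=
  (RCLike.nonneg_iff.mp hA.det_nonneg).1

theorem PosDef.re_det_rpow_add_le [Nonempty m] {A B : Matrix m m 𝕜} (hA : A.PosDef)
    (hB : B.PosSemidef) :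
    RCLike.re A.det ^ (Fintype.card m : ℝ)⁻¹ + RCLike.re B.det ^ (Fintype.card m : ℝ)⁻¹ ≤
      RCLike.re (A + B).det ^ (Fintype.card m : ℝ)⁻¹ := by
  obtain ⟨l, hl, hB_det, hAB_det⟩ := hA.exists_det_eq_mul_prod hB
  set w : ℝ := (Fintype.card m : ℝ)⁻¹
  set a := RCLike.re A.det
  have ha : 0 < a := (RCLike.pos_iff.mp hA.det_pos).1
  rw [hB_det, hAB_det, RCLike.re_mul_ofReal, RCLike.re_mul_ofReal,
    Real.mul_rpow ha.le (prod_nonneg fun i _ => hl i),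
    Real.mul_rpow ha.le (prod_nonneg fun i _ => by linarith [hl i])]
  calc a ^ w + a ^ w * (∏ i, l i) ^ w = a ^ w * (1 + (∏ i, l i) ^ w) := by ring
    _ ≤ a ^ w * (∏ i, (1 + l i)) ^ w :=
      mul_le_mul_of_nonneg_left (Real.one_add_prod_rpow_inv_card_le l hl) (by positivity)

theorem PosSemidef.re_det_rpow_add_le [Nonempty m] {A B : Matrix m m 𝕜} (hA : A.PosSemidef)
    (hB : B.PosSemidef) :
    RCLike.re A.det ^ (Fintype.card m : ℝ)⁻¹ + RCLike.re B.det ^ (Fintype.card m : ℝ)⁻¹ ≤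
      RCLike.re (A + B).det ^ (Fintype.card m : ℝ)⁻¹ := by
  by_cases hA' : A.PosDef
  · exact hA'.re_det_rpow_add_le hB
  by_cases hB' : B.PosDef
  · rw [add_comm, add_comm A]
    exact hB'.re_det_rpow_add_le hA
  rw [hA.posDef_iff_det_ne_zero, not_not] at hA'
  rw [hB.posDef_iff_det_ne_zero, not_not] at hB'
  rw [hA', hB', map_zero, Real.zero_rpow (by positivity), zero_add]
  exact Real.rpow_nonneg (hA.add hB).re_det_nonneg _

end Matrix

theorem stmt_19 {n : ℕ} (hn : 0 < n) (A B : Matrix (Fin n) (Fin n) ℂ)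
    (hA : A.PosSemidef) (hB : B.PosSemidef) (q : ℝ) (hq : 1 / (n : ℝ) ≤ q) :
    A.det.re ^ q + B.det.re ^ q ≤ (A + B).det.re ^ q := by
  have : Nonempty (Fin n) := Fin.pos_iff_nonempty.mp hn
  have hmink := hA.re_det_rpow_add_le hB
  rw [Fintype.card_fin] at hmink
  exact Real.rpow_add_rpow_le_rpow_of_rpow_add_rpow_le hA.re_det_nonneg hB.re_det_nonneg
    (hA.add hB).re_det_nonneg (by positivity) (by rwa [← one_div]) hmink
end
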